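/- Every pushout square in the category of POA theories and theory morphisms is a model amalgamation square: if φ1 : (Σ,E) → (Σ1,E1), φ2 : (Σ,E) → (Σ2,E2), θ1 : (Σ1,E1) → (Σ',E'), θ2 : (Σ2,E2) → (Σ',E') form a pushout square of theory morphisms, then for any preordered Σ1-algebra M1 satisfying E1 and preordered Σ2-algebra M2 satisfying E2 with φ1↾M1 = φ2↾M2, there is a unique preordered Σ'-algebra M' satisfying E' with θ1↾M' = M1 and θ2↾M' = M2, and the analogous unique amalgamation property holds for POA homomorphisms between such models. -/
import Mathlib


/-! Many-sorted algebra basics -/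

structure MSSignature (S : Type) where
  Op : (n : ℕ) → (Fin n → S) → S → Type

structure MSAlgebra {S : Type} (Sig : MSSignature S) where
  carrier : S → Type
  op : ∀ {n : ℕ} {ar : Fin n → S} {s : S}, Sig.Op n ar s → (∀ i, carrier (ar i)) → carrier s

inductive MSTerm {S : Type} (Sig : MSSignature S) : S → Type where
  | app {n : ℕ} {ar : Fin n → S} {s : S} (σ : Sig.Op n ar s)
      (args : ∀ i, MSTerm Sig (ar i)) : MSTerm Sig s

def MSAlgebra.eval {S : Type} {Sig : MSSignature S} (A : MSAlgebra Sig) :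
    ∀ {s : S}, MSTerm Sig s → A.carrier s
  | _, .app σ args => A.op σ (fun i => A.eval (args i))

structure MSHom {S : Type} {Sig : MSSignature S} (A B : MSAlgebra Sig) where
  toFun : ∀ s, A.carrier s → B.carrier s
  map_op : ∀ {n : ℕ} {ar : Fin n → S} {s : S} (σ : Sig.Op n ar s) (args : ∀ i, A.carrier (ar i)),
    toFun s (A.op σ args) = B.op σ (fun i => toFun (ar i) (args i))

def MSHom.id {S : Type} {Sig : MSSignature S} (A : MSAlgebra Sig) : MSHom A A :=
  ⟨fun _ a => a, fun _ _ => rfl⟩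

def MSHom.comp {S : Type} {Sig : MSSignature S} {A B C : MSAlgebra Sig}
    (h : MSHom A B) (g : MSHom B C) : MSHom A C where
  toFun s a := g.toFun s (h.toFun s a)
  map_op σ args := by
    show g.toFun _ (h.toFun _ (A.op σ args)) = _
    rw [h.map_op, g.map_op]

def termAlgebra {S : Type} (Sig : MSSignature S) : MSAlgebra Sig where
  carrier := MSTerm Sig
  op σ args := .app σ args
/-! Variables, sentences, signature morphisms (MSA) -/

def MSSignature.extend {S : Type} (Sig : MSSignature S) (V : Type) (vs : V → S) :
    MSSignature S where
  Op n ar s := Sig.Op n ar s ⊕ {v : V // vs v = s ∧ n = 0}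

def MSAlgebra.expand {S : Type} {Sig : MSSignature S} (A : MSAlgebra Sig)
    {V : Type} {vs : V → S} (θ : ∀ v, A.carrier (vs v)) :
    MSAlgebra (Sig.extend V vs) where
  carrier := A.carrier
  op := fun σ args =>
    match σ with
    | Sum.inl σ => A.op σ args
    | Sum.inr ⟨v, hv, _⟩ => hv ▸ θ v

inductive MSSentence {S : Type} : MSSignature S → Type 1 where
  | eq {Sig : MSSignature S} {s : S} (t t' : MSTerm Sig s) : MSSentence Sig
  | and {Sig : MSSignature S} (a b : MSSentence Sig) : MSSentence Sig
  | or {Sig : MSSignature S} (a b : MSSentence Sig) : MSSentence Sig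
  | imp {Sig : MSSignature S} (a b : MSSentence Sig) : MSSentence Sig
  | not {Sig : MSSignature S} (a : MSSentence Sig) : MSSentence Sig
  | all {Sig : MSSignature S} (V : Type) (vs : V → S)
      (ρ : MSSentence (Sig.extend V vs)) : MSSentence Sig
  | ex {Sig : MSSignature S} (V : Type) (vs : V → S)
      (ρ : MSSentence (Sig.extend V vs)) : MSSentence Sig

def MSSatisfies {S : Type} : ∀ {Sig : MSSignature S}, MSAlgebra Sig → MSSentence Sig → Prop
  | _, A, .eq t t' => A.eval t = A.eval t'
  | _, A, .and a b => MSSatisfies A a ∧ MSSatisfies A b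
  | _, A, .or a b => MSSatisfies A a ∨ MSSatisfies A b
  | _, A, .imp a b => MSSatisfies A a → MSSatisfies A b
  | _, A, .not a => ¬ MSSatisfies A a
  | _, A, .all _ _ ρ => ∀ θ, MSSatisfies (A.expand θ) ρ
  | _, A, .ex _ _ ρ => ¬ ∀ θ, ¬ MSSatisfies (A.expand θ) ρ

structure MSSigMorphism {S S' : Type} (Sig : MSSignature S) (Sig' : MSSignature S') where
  sortMap : S → S'
  opMap : ∀ {n : ℕ} {ar : Fin n → S} {s : S},
    Sig.Op n ar s → Sig'.Op n (sortMap ∘ ar) (sortMap s)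

def MSSigMorphism.reduct {S S' : Type} {Sig : MSSignature S} {Sig' : MSSignature S'}
    (φ : MSSigMorphism Sig Sig') (A' : MSAlgebra Sig') : MSAlgebra Sig where
  carrier s := A'.carrier (φ.sortMap s)
  op σ args := A'.op (φ.opMap σ) args

def MSTerm.translate {S S' : Type} {Sig : MSSignature S} {Sig' : MSSignature S'}
    (φ : MSSigMorphism Sig Sig') : ∀ {s : S}, MSTerm Sig s → MSTerm Sig' (φ.sortMap s)
  | _, .app σ args => .app (φ.opMap σ) (fun i => (args i).translate φ)

def MSSigMorphism.extend {S S' : Type} {Sig : MSSignature S} {Sig' : MSSignature S'}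
    (φ : MSSigMorphism Sig Sig') (V : Type) (vs : V → S) :
    MSSigMorphism (Sig.extend V vs) (Sig'.extend V (φ.sortMap ∘ vs)) where
  sortMap := φ.sortMap
  opMap := fun σ =>
    match σ with
    | Sum.inl σ => Sum.inl (φ.opMap σ)
    | Sum.inr ⟨v, hv, hn⟩ => Sum.inr ⟨v, by simp [hv], hn⟩

def MSSentence.translate {S S' : Type} :
    ∀ {Sig : MSSignature S} {Sig' : MSSignature S'},
      MSSigMorphism Sig Sig' → MSSentence Sig → MSSentence Sig'
  | _, _, φ, .eq t t' => .eq (t.translate φ) (t'.translate φ)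
  | _, _, φ, .and a b => .and (a.translate φ) (b.translate φ)
  | _, _, φ, .or a b => .or (a.translate φ) (b.translate φ)
  | _, _, φ, .imp a b => .imp (a.translate φ) (b.translate φ)
  | _, _, φ, .not a => .not (a.translate φ)
  | _, _, φ, .all V vs ρ => .all V (φ.sortMap ∘ vs) (ρ.translate (φ.extend V vs))
  | _, _, φ, .ex V vs ρ => .ex V (φ.sortMap ∘ vs) (ρ.translate (φ.extend V vs))
/-! Preordered algebra (POA) -/

structure POASignature where
  Sorts : Type
  isSys : Sorts → Bool
  sig : MSSignature Sorts

structure POAlgebra (P : POASignature) extends MSAlgebra P.sig where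
  le : ∀ s, P.isSys s = true → carrier s → carrier s → Prop
  le_refl : ∀ s (hs : P.isSys s = true) (a : carrier s), le s hs a a
  le_trans : ∀ s (hs : P.isSys s = true) (a b c : carrier s),
    le s hs a b → le s hs b c → le s hs a c
  monotone : ∀ {n : ℕ} {ar : Fin n → P.Sorts} {s : P.Sorts}
      (σ : P.sig.Op n ar s) (hs : P.isSys s = true)
      (args args' : ∀ i, carrier (ar i)),
      (∀ i, if h : P.isSys (ar i) = true
            then le (ar i) h (args i) (args' i) else args i = args' i) →
      le s hs (op σ args) (op σ args')

/-- A "model" over any signature with the sorts of `P`: an algebra together with a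
family of binary relations on the system-sorted carriers (no axioms required);
used to define satisfaction, including for expansions by variables. -/
structure POAModel (P : POASignature) (Sig : MSSignature P.Sorts) where
  alg : MSAlgebra Sig
  le : ∀ s, P.isSys s = true → alg.carrier s → alg.carrier s → Prop

def POAlgebra.toModel {P : POASignature} (A : POAlgebra P) : POAModel P P.sig :=
  ⟨A.toMSAlgebra, A.le⟩

def POAModel.expand {P : POASignature} {Sig : MSSignature P.Sorts} (M : POAModel P Sig)
    {V : Type} {vs : V → P.Sorts} (θ : ∀ v, M.alg.carrier (vs v)) :
    POAModel P (Sig.extend V vs) :=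
  ⟨M.alg.expand θ, M.le⟩

inductive POASentence (P : POASignature) : MSSignature P.Sorts → Type 1 where
  | eq {Sig : MSSignature P.Sorts} {s : P.Sorts} (t t' : MSTerm Sig s) : POASentence P Sig
  | tr {Sig : MSSignature P.Sorts} {s : P.Sorts} (hs : P.isSys s = true)
      (t t' : MSTerm Sig s) : POASentence P Sig
  | and {Sig : MSSignature P.Sorts} (a b : POASentence P Sig) : POASentence P Sig
  | or {Sig : MSSignature P.Sorts} (a b : POASentence P Sig) : POASentence P Sig
  | imp {Sig : MSSignature P.Sorts} (a b : POASentence P Sig) : POASentence P Sig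
  | not {Sig : MSSignature P.Sorts} (a : POASentence P Sig) : POASentence P Sig
  | all {Sig : MSSignature P.Sorts} (V : Type) (vs : V → P.Sorts)
      (ρ : POASentence P (Sig.extend V vs)) : POASentence P Sig
  | ex {Sig : MSSignature P.Sorts} (V : Type) (vs : V → P.Sorts)
      (ρ : POASentence P (Sig.extend V vs)) : POASentence P Sig

def POASat {P : POASignature} :
    ∀ {Sig : MSSignature P.Sorts}, POAModel P Sig → POASentence P Sig → Prop
  | _, M, .eq t t' => M.alg.eval t = M.alg.eval t'
  | _, M, .tr hs t t' => M.le _ hs (M.alg.eval t) (M.alg.eval t')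
  | _, M, .and a b => POASat M a ∧ POASat M b
  | _, M, .or a b => POASat M a ∨ POASat M b
  | _, M, .imp a b => POASat M a → POASat M b
  | _, M, .not a => ¬ POASat M a
  | _, M, .all _ _ ρ => ∀ θ, POASat (M.expand θ) ρ
  | _, M, .ex _ _ ρ => ¬ ∀ θ, ¬ POASat (M.expand θ) ρ

structure POASigMorphism (P P' : POASignature) where
  toMS : MSSigMorphism P.sig P'.sig
  sys_pres : ∀ s, P'.isSys (toMS.sortMap s) = P.isSys s

def POASigMorphism.reductModel {P P' : POASignature} (φ : POASigMorphism P P')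
    (M' : POAModel P' P'.sig) : POAModel P P.sig where
  alg := φ.toMS.reduct M'.alg
  le s hs := M'.le (φ.toMS.sortMap s) (by rw [φ.sys_pres]; exact hs)

def POASentence.translate {P P' : POASignature} :
    ∀ {Sig : MSSignature P.Sorts} {Sig' : MSSignature P'.Sorts}
      (f : MSSigMorphism Sig Sig'),
      (∀ s, P'.isSys (f.sortMap s) = P.isSys s) →
      POASentence P Sig → POASentence P' Sig'
  | _, _, f, _, .eq t t' => .eq (t.translate f) (t'.translate f)
  | _, _, f, hf, .tr hs t t' => .tr (by rw [hf]; exact hs) (t.translate f) (t'.translate f)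
  | _, _, f, hf, .and a b => .and (a.translate f hf) (b.translate f hf)
  | _, _, f, hf, .or a b => .or (a.translate f hf) (b.translate f hf)
  | _, _, f, hf, .imp a b => .imp (a.translate f hf) (b.translate f hf)
  | _, _, f, hf, .not a => .not (a.translate f hf)
  | _, _, f, hf, .all V vs ρ => .all V (f.sortMap ∘ vs) (ρ.translate (f.extend V vs) hf)
  | _, _, f, hf, .ex V vs ρ => .ex V (f.sortMap ∘ vs) (ρ.translate (f.extend V vs) hf)

def POASigMorphism.sen {P P' : POASignature} (φ : POASigMorphism P P') :
    POASentence P P.sig → POASentence P' P'.sig :=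
  fun ρ => ρ.translate φ.toMS φ.sys_pres
/-! The category of POA signatures, reducts, amalgamation -/

def POASigMorphism.id (P : POASignature) : POASigMorphism P P where
  toMS := ⟨fun s => s, fun σ => σ⟩
  sys_pres _ := rfl

def POASigMorphism.comp {P1 P2 P3 : POASignature}
    (φ : POASigMorphism P1 P2) (ψ : POASigMorphism P2 P3) : POASigMorphism P1 P3 where
  toMS := ⟨fun s => ψ.toMS.sortMap (φ.toMS.sortMap s),
           fun σ => ψ.toMS.opMap (φ.toMS.opMap σ)⟩
  sys_pres s := by rw [ψ.sys_pres, φ.sys_pres]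

/-- Reduct of a preordered algebra along a POA signature morphism. -/
def POASigMorphism.reduct {P P' : POASignature} (φ : POASigMorphism P P')
    (A' : POAlgebra P') : POAlgebra P where
  carrier s := A'.carrier (φ.toMS.sortMap s)
  op σ args := A'.op (φ.toMS.opMap σ) args
  le s hs := A'.le (φ.toMS.sortMap s) (by rw [φ.sys_pres]; exact hs)
  le_refl s hs a := A'.le_refl _ _ a
  le_trans s hs a b c hab hbc := A'.le_trans _ _ a b c hab hbc
  monotone := by
    intro n ar s σ hs args args' hargs
    refine A'.monotone (φ.toMS.opMap σ) (by rw [φ.sys_pres]; exact hs) args args' ?_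
    intro i
    have hi := hargs i
    simp only [Function.comp_apply]
    by_cases hb : P.isSys (ar i) = true
    · rw [dif_pos hb] at hi
      rw [dif_pos (show P'.isSys (φ.toMS.sortMap (ar i)) = true by rw [φ.sys_pres]; exact hb)]
      exact hi
    · rw [dif_neg hb] at hi
      rw [dif_neg (show ¬ P'.isSys (φ.toMS.sortMap (ar i)) = true by rw [φ.sys_pres]; exact hb)]
      exact hi

/-- Homomorphisms of preordered algebras. -/
structure POAHom {P : POASignature} (A B : POAlgebra P) extends
    MSHom A.toMSAlgebra B.toMSAlgebra where
  mono : ∀ s (hs : P.isSys s = true) a a', A.le s hs a a' → B.le s hs (toFun s a) (toFun s a')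

/-- Reduct of a POA homomorphism. -/
def POASigMorphism.reductHom {P P' : POASignature} (φ : POASigMorphism P P')
    {A' B' : POAlgebra P'} (h' : POAHom A' B') : POAHom (φ.reduct A') (φ.reduct B') where
  toFun s := h'.toFun (φ.toMS.sortMap s)
  map_op σ args := h'.map_op (φ.toMS.opMap σ) args
  mono _s _hs a a' h := h'.mono _ _ a a' h

/-- A model homomorphism packaged with its source and target. -/
structure HomObj (P : POASignature) where
  src : POAlgebra P
  tgt : POAlgebra P
  hom : POAHom src tgt

def POASigMorphism.reductHomObj {P P' : POASignature} (φ : POASigMorphism P P')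
    (H : HomObj P') : HomObj P :=
  ⟨φ.reduct H.src, φ.reduct H.tgt, φ.reductHom H.hom⟩

/-- A commutative square of POA signature morphisms is a pushout square. -/
def IsPushoutSquare {P P1 P2 P' : POASignature}
    (φ1 : POASigMorphism P P1) (φ2 : POASigMorphism P P2)
    (θ1 : POASigMorphism P1 P') (θ2 : POASigMorphism P2 P') : Prop :=
  φ1.comp θ1 = φ2.comp θ2 ∧
  ∀ (Q : POASignature) (ψ1 : POASigMorphism P1 Q) (ψ2 : POASigMorphism P2 Q),
    φ1.comp ψ1 = φ2.comp ψ2 →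
    ∃! μ : POASigMorphism P' Q, θ1.comp μ = ψ1 ∧ θ2.comp μ = ψ2

/-- A commutative square of POA signature morphisms is a model amalgamation square:
unique amalgamation of models and of model homomorphisms. -/
def IsAmalgamationSquare {P P1 P2 P' : POASignature}
    (φ1 : POASigMorphism P P1) (φ2 : POASigMorphism P P2)
    (θ1 : POASigMorphism P1 P') (θ2 : POASigMorphism P2 P') : Prop :=
  (∀ (M1 : POAlgebra P1) (M2 : POAlgebra P2), φ1.reduct M1 = φ2.reduct M2 →
    ∃! M' : POAlgebra P', θ1.reduct M' = M1 ∧ θ2.reduct M' = M2) ∧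
  (∀ (H1 : HomObj P1) (H2 : HomObj P2), φ1.reductHomObj H1 = φ2.reductHomObj H2 →
    ∃! H' : HomObj P', θ1.reductHomObj H' = H1 ∧ θ2.reductHomObj H' = H2)
/-! POA theories and theory morphisms -/

/-- Satisfaction of a set of sentences by a preordered algebra. -/
def SatTheory {P : POASignature} (A : POAlgebra P) (E : Set (POASentence P P.sig)) : Prop :=
  ∀ ρ ∈ E, POASat A.toModel ρ

structure POATheory where
  sig : POASignature
  axioms : Set (POASentence sig sig.sig)

structure POATheoryMorphism (T T' : POATheory) where
  mor : POASigMorphism T.sig T'.sig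
  cond : ∀ A' : POAlgebra T'.sig, SatTheory A' T'.axioms → SatTheory (mor.reduct A') T.axioms

def POATheoryMorphism.comp {T1 T2 T3 : POATheory}
    (f : POATheoryMorphism T1 T2) (g : POATheoryMorphism T2 T3) :
    POATheoryMorphism T1 T3 where
  mor := f.mor.comp g.mor
  cond A3 h3 := f.cond (g.mor.reduct A3) (g.cond A3 h3)

section Basics

/-- funext test over implicit binders -/
example (f g : ∀ {n : Nat}, Fin n → Nat) (h : ∀ n (x : Fin n), f x = g x) : @f = @g := by
  funext n x; exact h n x

lemma MSAlgebra.ext' {S : Type} {Sig : MSSignature S} {A B : MSAlgebra Sig}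
    (h1 : A.carrier = B.carrier) (h2 : HEq @A.op @B.op) : A = B := by
  cases A; cases B; cases h1; cases h2; rfl

lemma POAlgebra.ext' {P : POASignature} {A B : POAlgebra P}
    (h1 : A.toMSAlgebra = B.toMSAlgebra) (h2 : HEq A.le B.le) : A = B := by
  cases A; cases B; cases h1; cases h2; rfl

lemma POAHom.ext' {P : POASignature} {A B : POAlgebra P} {h h' : POAHom A B}
    (ht : h.toFun = h'.toFun) : h = h' := by
  cases h with | mk m p => cases h' with | mk m' p' =>
  cases m; cases m'; cases ht; rfl

lemma poahom_heq {P : POASignature} {A B A' B' : POAlgebra P}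
    (hA : A = A') (hB : B = B') (h : POAHom A B) (h' : POAHom A' B')
    (htf : ∀ s, HEq (h.toFun s) (h'.toFun s)) : HEq h h' := by
  subst hA; subst hB
  exact heq_of_eq (POAHom.ext' (funext fun s => eq_of_heq (htf s)))

lemma HomObj.ext' {P : POASignature} {X Y : HomObj P}
    (h1 : X.src = Y.src) (h2 : X.tgt = Y.tgt) (h3 : HEq X.hom Y.hom) : X = Y := by
  cases X; cases Y; cases h1; cases h2; cases h3; rfl

lemma MSSigMorphism.ext' {S S' : Type} {Sig : MSSignature S} {Sig' : MSSignature S'}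
    {f g : MSSigMorphism Sig Sig'} (h1 : f.sortMap = g.sortMap)
    (h2 : ∀ (n : ℕ) (ar : Fin n → S) (s : S) (σ : Sig.Op n ar s),
      HEq (f.opMap σ) (g.opMap σ)) : f = g := by
  cases f with | mk fs fo => cases g with | mk gs go =>
  cases h1
  have : @fo = @go := by
    funext n ar s σ; exact eq_of_heq (h2 n ar s σ)
  cases this; rfl

lemma POASigMorphism.ext' {P P' : POASignature} {f g : POASigMorphism P P'}
    (h1 : f.toMS.sortMap = g.toMS.sortMap)
    (h2 : ∀ (n : ℕ) (ar : Fin n → P.Sorts) (s : P.Sorts) (σ : P.sig.Op n ar s),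
      HEq (f.toMS.opMap σ) (g.toMS.opMap σ)) : f = g := by
  cases f; cases g; cases MSSigMorphism.ext' h1 h2; rfl

lemma POATheoryMorphism.ext' {T T' : POATheory} {f g : POATheoryMorphism T T'}
    (h : f.mor = g.mor) : f = g := by
  cases f; cases g; cases h; rfl

lemma poalg_op_heq {P : POASignature} {A B : POAlgebra P} (h : A = B)
    {n : ℕ} {ar : Fin n → P.Sorts} {s : P.Sorts} (σ : P.sig.Op n ar s) :
    HEq (fun args => A.op σ args) (fun args => B.op σ args) := by
  subst h; rfl

lemma poalg_le_heq {P : POASignature} {A B : POAlgebra P} (h : A = B) :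
    HEq A.le B.le := by subst h; rfl

lemma poalg_carrier_eq {P : POASignature} {A B : POAlgebra P} (h : A = B) :
    A.carrier = B.carrier := by subst h; rfl

lemma homobj_toFun_heq {P : POASignature} {X Y : HomObj P} (h : X = Y) :
    HEq X.hom.toFun Y.hom.toFun := by subst h; rfl

-- composition / reduct lemmas (hoping for rfl)
lemma sig_comp_assoc {P1 P2 P3 P4 : POASignature} (f : POASigMorphism P1 P2)
    (g : POASigMorphism P2 P3) (h : POASigMorphism P3 P4) :
    (f.comp g).comp h = f.comp (g.comp h) := rfl

lemma reduct_comp {P1 P2 P3 : POASignature} (f : POASigMorphism P1 P2)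
    (g : POASigMorphism P2 P3) (A : POAlgebra P3) :
    (f.comp g).reduct A = f.reduct (g.reduct A) := rfl

lemma reductHom_comp {P1 P2 P3 : POASignature} (f : POASigMorphism P1 P2)
    (g : POASigMorphism P2 P3) (X : HomObj P3) :
    (f.comp g).reductHomObj X = f.reductHomObj (g.reductHomObj X) := rfl

def POAHom.idHom {P : POASignature} (A : POAlgebra P) : POAHom A A :=
  ⟨MSHom.id A.toMSAlgebra, fun _ _ _ _ h => h⟩

lemma reductHom_id {P P' : POASignature} (φ : POASigMorphism P P') (A : POAlgebra P') :
    φ.reductHom (POAHom.idHom A) = POAHom.idHom (φ.reduct A) := rfl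

end Basics
section Satisfaction

variable {P P' : POASignature}

lemma POAModel.ext' {Sig : MSSignature P.Sorts} {M N : POAModel P Sig}
    (h1 : M.alg = N.alg) (h2 : HEq M.le N.le) : M = N := by
  cases M; cases N; cases h1; cases h2; rfl

/-- Reduct of a POAModel along a sorted signature morphism with sys-preservation. -/
def redM {Sig : MSSignature P.Sorts} {Sig' : MSSignature P'.Sorts}
    (f : MSSigMorphism Sig Sig') (hf : ∀ s, P'.isSys (f.sortMap s) = P.isSys s)
    (M' : POAModel P' Sig') : POAModel P Sig :=
  ⟨f.reduct M'.alg, fun s hs => M'.le (f.sortMap s) (by rw [hf]; exact hs)⟩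

lemma eval_translate {Sig : MSSignature P.Sorts} {Sig' : MSSignature P'.Sorts}
    (f : MSSigMorphism Sig Sig') (A' : MSAlgebra Sig') {s : P.Sorts} (t : MSTerm Sig s) :
    (f.reduct A').eval t = A'.eval (t.translate f) := by
  induction t with
  | app σ args ih =>
    show A'.op (f.opMap σ) (fun i => (f.reduct A').eval (args i)) = _
    simp only [MSTerm.translate, MSAlgebra.eval]
    exact congrArg _ (funext fun i => ih i)

lemma redM_expand {Sig : MSSignature P.Sorts} {Sig' : MSSignature P'.Sorts}
    (f : MSSigMorphism Sig Sig') (hf : ∀ s, P'.isSys (f.sortMap s) = P.isSys s)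
    (M' : POAModel P' Sig') {V : Type} {vs : V → P.Sorts}
    (θ : ∀ v, M'.alg.carrier (f.sortMap (vs v))) :
    redM (f.extend V vs) hf (M'.expand θ) = (redM f hf M').expand θ := by
  have halg : ((f.extend V vs).reduct (M'.alg.expand θ)) = ((f.reduct M'.alg).expand θ) := by
    refine MSAlgebra.ext' rfl (heq_of_eq ?_)
    funext n ar s σ args
    match σ with
    | Sum.inl σ0 => rfl
    | Sum.inr ⟨v, hv, hn⟩ =>
      subst hv
      show (M'.alg.expand θ).op ((f.extend V vs).opMap (Sum.inr ⟨v, ⟨rfl, hn⟩⟩)) args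
        = ((f.reduct M'.alg).expand θ).op (Sum.inr ⟨v, ⟨rfl, hn⟩⟩) args
      simp only [MSSigMorphism.extend, MSAlgebra.expand, MSSigMorphism.reduct]
      split
      · rename_i heq; exact absurd heq (by simp)
      · rename_i v1 hv1 hn1 heq
        obtain rfl : v = v1 := congrArg Subtype.val (Sum.inr.inj heq)
        rfl
  exact POAModel.ext' halg HEq.rfl

lemma sat_red {Sig : MSSignature P.Sorts} (ρ : POASentence P Sig) :
    ∀ {Sig' : MSSignature P'.Sorts}
    (f : MSSigMorphism Sig Sig') (hf : ∀ s, P'.isSys (f.sortMap s) = P.isSys s)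
    (M' : POAModel P' Sig'),
    POASat M' (ρ.translate f hf) ↔ POASat (redM f hf M') ρ := by
  induction ρ with
  | eq t t' =>
    intro Sig' f hf M'
    exact iff_of_eq (congrArg₂ (fun a b => a = b)
      (eval_translate f M'.alg t).symm (eval_translate f M'.alg t').symm)
  | tr hs t t' =>
    intro Sig' f hf M'
    exact iff_of_eq (congrArg₂ (M'.le _ _)
      (eval_translate f M'.alg t).symm (eval_translate f M'.alg t').symm)
  | and a b iha ihb => intro Sig' f hf M'; exact and_congr (iha f hf M') (ihb f hf M')
  | or a b iha ihb => intro Sig' f hf M'; exact or_congr (iha f hf M') (ihb f hf M')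
  | imp a b iha ihb => intro Sig' f hf M'; exact imp_congr (iha f hf M') (ihb f hf M')
  | not a iha => intro Sig' f hf M'; exact not_congr (iha f hf M')
  | all V vs ρ ih =>
    intro Sig' f hf M'
    show (∀ θ, POASat (M'.expand θ) _) ↔ (∀ θ, POASat ((redM f hf M').expand θ) _)
    refine forall_congr' fun θ => ?_
    rw [ih (f.extend V vs) hf (M'.expand θ), redM_expand]
  | ex V vs ρ ih =>
    intro Sig' f hf M'
    show (¬ ∀ θ, ¬ POASat (M'.expand θ) _) ↔ _
    refine not_congr (forall_congr' fun θ => not_congr ?_)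
    rw [ih (f.extend V vs) hf (M'.expand θ), redM_expand]

lemma toModel_red (ψ : POASigMorphism P P') (A' : POAlgebra P') :
    redM ψ.toMS ψ.sys_pres A'.toModel = (ψ.reduct A').toModel := rfl

lemma sat_lemma (ψ : POASigMorphism P P') (A' : POAlgebra P') (ρ : POASentence P P.sig) :
    POASat A'.toModel (ψ.sen ρ) ↔ POASat (ψ.reduct A').toModel ρ := by
  rw [show ψ.sen ρ = ρ.translate ψ.toMS ψ.sys_pres from rfl,
    sat_red ρ ψ.toMS ψ.sys_pres A'.toModel, toModel_red]

end Satisfaction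
section Coverage

variable {T T1 T2 T' : POATheory}

/-- Union-of-translated-axioms theory over a target signature. -/
def unionThy {Z : POASignature} (a b : POASigMorphism T'.sig Z) : POATheory :=
  ⟨Z, a.sen '' T'.axioms ∪ b.sen '' T'.axioms⟩

def unionMorL {Z : POASignature} (a b : POASigMorphism T'.sig Z) :
    POATheoryMorphism T' (unionThy a b) :=
  ⟨a, fun A hA ρ hρ => (sat_lemma a A ρ).1 (hA _ (Or.inl ⟨ρ, hρ, rfl⟩))⟩

def unionMorR {Z : POASignature} (a b : POASigMorphism T'.sig Z) :
    POATheoryMorphism T' (unionThy a b) :=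
  ⟨b, fun A hA ρ hρ => (sat_lemma b A ρ).1 (hA _ (Or.inr ⟨ρ, hρ, rfl⟩))⟩

def boolSig (P : POASignature) : POASignature :=
  ⟨P.Sorts × Bool, fun p => P.isSys p.1, ⟨fun n ar s => P.sig.Op n (fun i => (ar i).1) s.1⟩⟩

def boolMor (P : POASignature) (c : P.Sorts → Bool) : POASigMorphism P (boolSig P) :=
  ⟨⟨fun s => (s, c s), fun σ => σ⟩, fun _ => rfl⟩

def opSig (P : POASignature) : POASignature :=
  ⟨P.Sorts, P.isSys, ⟨fun n ar s => P.sig.Op n ar s × Bool⟩⟩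

def opMor (P : POASignature) (c : ∀ {n : ℕ} {ar : Fin n → P.Sorts} {s : P.Sorts},
    P.sig.Op n ar s → Bool) : POASigMorphism P (opSig P) :=
  ⟨⟨fun s => s, fun σ => (σ, c σ)⟩, fun _ => rfl⟩

variable (φ1 : POATheoryMorphism T T1) (φ2 : POATheoryMorphism T T2)
variable (θ1 : POATheoryMorphism T1 T') (θ2 : POATheoryMorphism T2 T')

/-- Covering predicate for operation symbols of the pushout signature. -/
def CovOp {n : ℕ} {ar : Fin n → T'.sig.Sorts} {s : T'.sig.Sorts}
    (σ' : T'.sig.sig.Op n ar s) : Prop :=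
  (∃ (ar1 : Fin n → T1.sig.Sorts) (s1 : T1.sig.Sorts) (σ1 : T1.sig.sig.Op n ar1 s1),
    ∃ (_ : θ1.mor.toMS.sortMap ∘ ar1 = ar) (_ : θ1.mor.toMS.sortMap s1 = s),
      HEq (θ1.mor.toMS.opMap σ1) σ') ∨
  (∃ (ar2 : Fin n → T2.sig.Sorts) (s2 : T2.sig.Sorts) (σ2 : T2.sig.sig.Op n ar2 s2),
    ∃ (_ : θ2.mor.toMS.sortMap ∘ ar2 = ar) (_ : θ2.mor.toMS.sortMap s2 = s),
      HEq (θ2.mor.toMS.opMap σ2) σ')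

lemma cover_sort
    (hcomm : φ1.comp θ1 = φ2.comp θ2)
    (hpo : ∀ (T'' : POATheory) (ψ1 : POATheoryMorphism T1 T'') (ψ2 : POATheoryMorphism T2 T''),
      φ1.comp ψ1 = φ2.comp ψ2 →
      ∃! μ : POATheoryMorphism T' T'', θ1.comp μ = ψ1 ∧ θ2.comp μ = ψ2)
    (s' : T'.sig.Sorts) :
    (∃ s1, θ1.mor.toMS.sortMap s1 = s') ∨ (∃ s2, θ2.mor.toMS.sortMap s2 = s') := by
  classical
  set covb : T'.sig.Sorts → Bool := fun s =>
    if (∃ s1, θ1.mor.toMS.sortMap s1 = s) ∨ (∃ s2, θ2.mor.toMS.sortMap s2 = s)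
    then true else false with hcovb
  set α : POASigMorphism T'.sig (boolSig T'.sig) := boolMor T'.sig (fun _ => true) with hα
  set β : POASigMorphism T'.sig (boolSig T'.sig) := boolMor T'.sig covb with hβ
  have hφψ : φ1.comp (θ1.comp (unionMorL α β)) = φ2.comp (θ2.comp (unionMorL α β)) := by
    apply POATheoryMorphism.ext'
    exact congrArg (fun m => m.comp (unionMorL α β).mor) (congrArg POATheoryMorphism.mor hcomm)
  obtain ⟨μ, hμ, huni⟩ := hpo (unionThy α β) (θ1.comp (unionMorL α β)) (θ2.comp (unionMorL α β)) hφψ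
  have hβ1 : ∀ (θi : POATheoryMorphism T1 T') , True := fun _ => trivial
  have hfacβ1 : θ1.comp (unionMorR α β) = θ1.comp (unionMorL α β) := by
    apply POATheoryMorphism.ext'
    apply POASigMorphism.ext'
    · funext s1
      show (θ1.mor.toMS.sortMap s1, covb (θ1.mor.toMS.sortMap s1)) = (θ1.mor.toMS.sortMap s1, true)
      have : covb (θ1.mor.toMS.sortMap s1) = true := by
        rw [hcovb]; exact if_pos (Or.inl ⟨s1, rfl⟩)
      rw [this]
    · intro n ar s σ; exact HEq.rfl
  have hfacβ2 : θ2.comp (unionMorR α β) = θ2.comp (unionMorL α β) := by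
    apply POATheoryMorphism.ext'
    apply POASigMorphism.ext'
    · funext s2
      show (θ2.mor.toMS.sortMap s2, covb (θ2.mor.toMS.sortMap s2)) = (θ2.mor.toMS.sortMap s2, true)
      have : covb (θ2.mor.toMS.sortMap s2) = true := by
        rw [hcovb]; exact if_pos (Or.inr ⟨s2, rfl⟩)
      rw [this]
    · intro n ar s σ; exact HEq.rfl
  have hab : unionMorL α β = unionMorR α β :=
    (huni (unionMorL α β) ⟨rfl, rfl⟩).trans (huni (unionMorR α β) ⟨hfacβ1, hfacβ2⟩).symm
  have hval := congrArg
    (fun (m : POATheoryMorphism T' (unionThy α β)) => (m.mor.toMS.sortMap s').2) hab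
  by_contra hcon
  have hval3 : true = (if (∃ s1, θ1.mor.toMS.sortMap s1 = s') ∨
      (∃ s2, θ2.mor.toMS.sortMap s2 = s') then true else false) := hval
  rw [if_neg hcon] at hval3
  exact Bool.noConfusion hval3

lemma cover_op
    (hcomm : φ1.comp θ1 = φ2.comp θ2)
    (hpo : ∀ (T'' : POATheory) (ψ1 : POATheoryMorphism T1 T'') (ψ2 : POATheoryMorphism T2 T''),
      φ1.comp ψ1 = φ2.comp ψ2 →
      ∃! μ : POATheoryMorphism T' T'', θ1.comp μ = ψ1 ∧ θ2.comp μ = ψ2)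
    {n : ℕ} {ar : Fin n → T'.sig.Sorts} {s : T'.sig.Sorts} (σ' : T'.sig.sig.Op n ar s) :
    CovOp θ1 θ2 σ' := by
  classical
  set α : POASigMorphism T'.sig (opSig T'.sig) := opMor T'.sig (fun _ => true) with hα
  set β : POASigMorphism T'.sig (opSig T'.sig) :=
    opMor T'.sig (fun σ => if CovOp θ1 θ2 σ then true else false) with hβ
  have hφψ : φ1.comp (θ1.comp (unionMorL α β)) = φ2.comp (θ2.comp (unionMorL α β)) := by
    apply POATheoryMorphism.ext'
    exact congrArg (fun m => m.comp (unionMorL α β).mor) (congrArg POATheoryMorphism.mor hcomm)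
  obtain ⟨μ, hμ, huni⟩ := hpo (unionThy α β) (θ1.comp (unionMorL α β)) (θ2.comp (unionMorL α β)) hφψ
  have hfacβ1 : θ1.comp (unionMorR α β) = θ1.comp (unionMorL α β) := by
    apply POATheoryMorphism.ext'
    refine POASigMorphism.ext' rfl ?_
    intro n1 ar1 s1 σ1
    refine heq_of_eq ?_
    show (θ1.mor.toMS.opMap σ1, if CovOp θ1 θ2 (θ1.mor.toMS.opMap σ1) then true else false)
      = (θ1.mor.toMS.opMap σ1, true)
    have hcov : CovOp θ1 θ2 (θ1.mor.toMS.opMap σ1) := Or.inl ⟨ar1, s1, σ1, rfl, rfl, HEq.rfl⟩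
    rw [if_pos hcov]
  have hfacβ2 : θ2.comp (unionMorR α β) = θ2.comp (unionMorL α β) := by
    apply POATheoryMorphism.ext'
    refine POASigMorphism.ext' rfl ?_
    intro n2 ar2 s2 σ2
    refine heq_of_eq ?_
    show (θ2.mor.toMS.opMap σ2, if CovOp θ1 θ2 (θ2.mor.toMS.opMap σ2) then true else false)
      = (θ2.mor.toMS.opMap σ2, true)
    have hcov : CovOp θ1 θ2 (θ2.mor.toMS.opMap σ2) := Or.inr ⟨ar2, s2, σ2, rfl, rfl, HEq.rfl⟩
    rw [if_pos hcov]
  have hab : unionMorL α β = unionMorR α β :=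
    (huni (unionMorL α β) ⟨rfl, rfl⟩).trans (huni (unionMorR α β) ⟨hfacβ1, hfacβ2⟩).symm
  have hval := congrArg
    (fun (m : POATheoryMorphism T' (unionThy α β)) => (m.mor.toMS.opMap σ').2) hab
  by_contra hcon
  have hval3 : true = (if CovOp θ1 θ2 σ' then true else false) := hval
  rw [if_neg hcon] at hval3
  exact Bool.noConfusion hval3

end Coverage
section Uniqueness

variable {T T1 T2 T' : POATheory}
variable {θ1 : POATheoryMorphism T1 T'} {θ2 : POATheoryMorphism T2 T'}

lemma alg_uniq
    (covS : ∀ s', (∃ s1, θ1.mor.toMS.sortMap s1 = s') ∨ (∃ s2, θ2.mor.toMS.sortMap s2 = s'))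
    (covO : ∀ {n : ℕ} {ar : Fin n → T'.sig.Sorts} {s : T'.sig.Sorts}
      (σ' : T'.sig.sig.Op n ar s), CovOp θ1 θ2 σ')
    {Ma Mb : POAlgebra T'.sig}
    (h1 : θ1.mor.reduct Ma = θ1.mor.reduct Mb)
    (h2 : θ2.mor.reduct Ma = θ2.mor.reduct Mb) : Ma = Mb := by
  obtain ⟨⟨ca, oa⟩, la, lra, lta, ma⟩ := Ma
  obtain ⟨⟨cb, ob⟩, lb, lrb, ltb, mb⟩ := Mb
  have hC : ca = cb := by
    funext s'
    rcases covS s' with ⟨s1, rfl⟩ | ⟨s2, rfl⟩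
    · exact congrFun (congrArg (fun (X : POAlgebra T1.sig) => X.carrier) h1) s1
    · exact congrFun (congrArg (fun (X : POAlgebra T2.sig) => X.carrier) h2) s2
  subst hC
  have hop : @oa = @ob := by
    funext n ar s σ args
    rcases covO σ with ⟨ar1, s1, σ1, har, hs, hσ⟩ | ⟨ar2, s2, σ2, har, hs, hσ⟩
    · subst har; subst hs
      have hσ' := eq_of_heq hσ; subst hσ'
      exact congrFun (eq_of_heq (poalg_op_heq h1 σ1)) args
    · subst har; subst hs
      have hσ' := eq_of_heq hσ; subst hσ'
      exact congrFun (eq_of_heq (poalg_op_heq h2 σ2)) args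
  subst hop
  have hle : la = lb := by
    funext s' hs x y
    rcases covS s' with ⟨s1, rfl⟩ | ⟨s2, rfl⟩
    · have hs1 : T1.sig.isSys s1 = true := by rw [← θ1.mor.sys_pres]; exact hs
      have hh := poalg_le_heq h1
      have he := eq_of_heq hh
      exact congrFun (congrFun (congrFun (congrFun he s1) hs1) x) y
    · have hs2 : T2.sig.isSys s2 = true := by rw [← θ2.mor.sys_pres]; exact hs
      have hh := poalg_le_heq h2
      have he := eq_of_heq hh
      exact congrFun (congrFun (congrFun (congrFun he s2) hs2) x) y
  subst hle
  rfl

lemma hom_uniq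
    (covS : ∀ s', (∃ s1, θ1.mor.toMS.sortMap s1 = s') ∨ (∃ s2, θ2.mor.toMS.sortMap s2 = s'))
    (covO : ∀ {n : ℕ} {ar : Fin n → T'.sig.Sorts} {s : T'.sig.Sorts}
      (σ' : T'.sig.sig.Op n ar s), CovOp θ1 θ2 σ')
    {Ha Hb : HomObj T'.sig}
    (h1 : θ1.mor.reductHomObj Ha = θ1.mor.reductHomObj Hb)
    (h2 : θ2.mor.reductHomObj Ha = θ2.mor.reductHomObj Hb) : Ha = Hb := by
  have hsrc : Ha.src = Hb.src :=
    alg_uniq covS covO (congrArg (fun X => X.src) h1) (congrArg (fun X => X.src) h2)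
  have htgt : Ha.tgt = Hb.tgt :=
    alg_uniq covS covO (congrArg (fun X => X.tgt) h1) (congrArg (fun X => X.tgt) h2)
  obtain ⟨sa, ta, ha⟩ := Ha
  obtain ⟨sb, tb, hb⟩ := Hb
  cases hsrc; cases htgt
  refine HomObj.ext' rfl rfl (heq_of_eq (POAHom.ext' (funext fun s' => ?_)))
  rcases covS s' with ⟨s1, rfl⟩ | ⟨s2, rfl⟩
  · have hh := homobj_toFun_heq h1
    have he := eq_of_heq hh
    exact congrFun he s1
  · have hh := homobj_toFun_heq h2
    have he := eq_of_heq hh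
    exact congrFun he s2

end Uniqueness
section Existence

def relP {P : POASignature} (A : POAlgebra P) (s : P.Sorts) :
    A.carrier s → A.carrier s → Prop := fun x y => ∀ h, A.le s h x y

lemma relP_reduct {P P' : POASignature} (φ : POASigMorphism P P') (A : POAlgebra P') (s : P.Sorts) :
    relP A (φ.toMS.sortMap s) = relP (φ.reduct A) s := by
  funext x y
  apply propext
  constructor
  · intro hx h
    exact hx (by rw [φ.sys_pres]; exact h)
  · intro hx h'
    exact hx (by rw [← φ.sys_pres]; exact h')

structure Tup : Type 1 where
  Ts : Type
  Tt : Type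
  rs : Ts → Ts → Prop
  rt : Tt → Tt → Prop
  f : Ts → Tt

def FH {P : POASignature} (X : HomObj P) (s : P.Sorts) : Tup :=
  ⟨X.src.carrier s, X.tgt.carrier s, relP X.src s, relP X.tgt s, X.hom.toFun s⟩

lemma FH_reduct {P P' : POASignature} (φ : POASigMorphism P P') (X : HomObj P') (s : P.Sorts) :
    FH X (φ.toMS.sortMap s) = FH (φ.reductHomObj X) s := by
  unfold FH
  rw [relP_reduct φ X.src s, relP_reduct φ X.tgt s]
  rfl

variable {P P1 P2 : POASignature}

structure AmalgData (P P1 P2 : POASignature) where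
  φ1 : POASigMorphism P P1
  φ2 : POASigMorphism P P2
  H1 : HomObj P1
  H2 : HomObj P2
  hH : φ1.reductHomObj H1 = φ2.reductHomObj H2

namespace AmalgData

variable (D : AmalgData P P1 P2)

def Srel : P1.Sorts ⊕ P2.Sorts → P1.Sorts ⊕ P2.Sorts → Prop :=
  fun a b => ∃ s, a = Sum.inl (D.φ1.toMS.sortMap s) ∧ b = Sum.inr (D.φ2.toMS.sortMap s)

def QS := Quot D.Srel

def tupF : P1.Sorts ⊕ P2.Sorts → Tup := Sum.elim (FH D.H1) (FH D.H2)

lemma tupF_compat : ∀ a b, D.Srel a b → D.tupF a = D.tupF b := by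
  rintro a b ⟨s, rfl, rfl⟩
  show FH D.H1 (D.φ1.toMS.sortMap s) = FH D.H2 (D.φ2.toMS.sortMap s)
  rw [FH_reduct D.φ1 D.H1 s, FH_reduct D.φ2 D.H2 s, D.hH]

def TupQ : D.QS → Tup := Quot.lift D.tupF D.tupF_compat

def Cs (q : D.QS) : Type := (D.TupQ q).Ts
def Ct (q : D.QS) : Type := (D.TupQ q).Tt
def les (q : D.QS) : D.Cs q → D.Cs q → Prop := (D.TupQ q).rs
def letr (q : D.QS) : D.Ct q → D.Ct q → Prop := (D.TupQ q).rt
def hq (q : D.QS) : D.Cs q → D.Ct q := (D.TupQ q).f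

def isSysQ : D.QS → Bool :=
  Quot.lift (Sum.elim P1.isSys P2.isSys) (by
    rintro a b ⟨s, rfl, rfl⟩
    show P1.isSys (D.φ1.toMS.sortMap s) = P2.isSys (D.φ2.toMS.sortMap s)
    rw [D.φ1.sys_pres, D.φ2.sys_pres])

def QOpPred {n : ℕ} {ar : Fin n → D.QS} {s : D.QS}
    (fg : PProd ((∀ i, D.Cs (ar i)) → D.Cs s) ((∀ i, D.Ct (ar i)) → D.Ct s)) : Prop :=
  (∀ (_ : D.isSysQ s = true) (args args' : ∀ i, D.Cs (ar i)),
    (∀ i, if _ : D.isSysQ (ar i) = true then D.les (ar i) (args i) (args' i)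
          else args i = args' i) → D.les s (fg.1 args) (fg.1 args')) ∧
  (∀ (_ : D.isSysQ s = true) (args args' : ∀ i, D.Ct (ar i)),
    (∀ i, if _ : D.isSysQ (ar i) = true then D.letr (ar i) (args i) (args' i)
          else args i = args' i) → D.letr s (fg.2 args) (fg.2 args')) ∧
  (∀ args, D.hq s (fg.1 args) = fg.2 (fun i => D.hq (ar i) (args i)))

def QSig : POASignature :=
  ⟨D.QS, D.isSysQ, ⟨fun _ ar s => {fg : PProd ((∀ i, D.Cs (ar i)) → D.Cs s)
    ((∀ i, D.Ct (ar i)) → D.Ct s) // D.QOpPred fg}⟩⟩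

def Ns : POAlgebra D.QSig where
  carrier := D.Cs
  op σ args := σ.1.1 args
  le := fun s _ => D.les s
  le_refl := by
    intro s
    induction s using Quot.ind with
    | _ a =>
     cases a with
    | inl s1 => exact fun hs x h => D.H1.src.le_refl s1 h x
    | inr s2 => exact fun hs x h => D.H2.src.le_refl s2 h x
  le_trans := by
    intro s
    induction s using Quot.ind with
    | _ a =>
     cases a with
    | inl s1 => exact fun hs x y z hxy hyz h => D.H1.src.le_trans s1 h x y z (hxy h) (hyz h)
    | inr s2 => exact fun hs x y z hxy hyz h => D.H2.src.le_trans s2 h x y z (hxy h) (hyz h)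
  monotone := fun σ hs args args' hargs => σ.2.1 hs args args' hargs

def Nt : POAlgebra D.QSig where
  carrier := D.Ct
  op σ args := σ.1.2 args
  le := fun s _ => D.letr s
  le_refl := by
    intro s
    induction s using Quot.ind with
    | _ a =>
     cases a with
    | inl s1 => exact fun hs x h => D.H1.tgt.le_refl s1 h x
    | inr s2 => exact fun hs x h => D.H2.tgt.le_refl s2 h x
  le_trans := by
    intro s
    induction s using Quot.ind with
    | _ a =>
     cases a with
    | inl s1 => exact fun hs x y z hxy hyz h => D.H1.tgt.le_trans s1 h x y z (hxy h) (hyz h)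
    | inr s2 => exact fun hs x y z hxy hyz h => D.H2.tgt.le_trans s2 h x y z (hxy h) (hyz h)
  monotone := fun σ hs args args' hargs => σ.2.2.1 hs args args' hargs

def hatH : POAHom D.Ns D.Nt where
  toFun := fun s => D.hq s
  map_op σ args := σ.2.2.2 args
  mono := by
    intro s
    induction s using Quot.ind with
    | _ a =>
     cases a with
    | inl s1 => exact fun hs x y hxy h => D.H1.hom.mono s1 h x y (hxy h)
    | inr s2 => exact fun hs x y hxy h => D.H2.hom.mono s2 h x y (hxy h)

def NH : HomObj D.QSig := ⟨D.Ns, D.Nt, D.hatH⟩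

/-- generic morphism into the amalgamated signature -/
def mkOp (R : POASignature) (u : R.Sorts → D.QS) (X : HomObj R)
    (es : ∀ s, D.Cs (u s) = X.src.carrier s) (et : ∀ s, D.Ct (u s) = X.tgt.carrier s)
    {n : ℕ} {ar : Fin n → R.Sorts} {s : R.Sorts} (σ : R.sig.Op n ar s) :
    PProd ((∀ i, D.Cs (u (ar i))) → D.Cs (u s)) ((∀ i, D.Ct (u (ar i))) → D.Ct (u s)) :=
  ⟨fun args => cast (es s).symm (X.src.op σ (fun i => cast (es (ar i)) (args i))),
   fun args => cast (et s).symm (X.tgt.op σ (fun i => cast (et (ar i)) (args i)))⟩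

def mkMor (R : POASignature) (u : R.Sorts → D.QS)
    (hsys : ∀ s, D.isSysQ (u s) = R.isSys s) (X : HomObj R)
    (es : ∀ s, D.Cs (u s) = X.src.carrier s) (et : ∀ s, D.Ct (u s) = X.tgt.carrier s)
    (hm : ∀ {n : ℕ} {ar : Fin n → R.Sorts} {s : R.Sorts} (σ : R.sig.Op n ar s),
      D.QOpPred (D.mkOp R u X es et σ)) : POASigMorphism R D.QSig :=
  ⟨⟨u, fun σ => ⟨D.mkOp R u X es et σ, hm σ⟩⟩, hsys⟩

lemma mkMor_congr (R : POASignature) (u u' : R.Sorts → D.QS)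
    (hsys : ∀ s, D.isSysQ (u s) = R.isSys s) (hsys' : ∀ s, D.isSysQ (u' s) = R.isSys s)
    (X X' : HomObj R)
    (es : ∀ s, D.Cs (u s) = X.src.carrier s) (et : ∀ s, D.Ct (u s) = X.tgt.carrier s)
    (es' : ∀ s, D.Cs (u' s) = X'.src.carrier s) (et' : ∀ s, D.Ct (u' s) = X'.tgt.carrier s)
    (hm : ∀ {n : ℕ} {ar : Fin n → R.Sorts} {s : R.Sorts} (σ : R.sig.Op n ar s),
      D.QOpPred (D.mkOp R u X es et σ))
    (hm' : ∀ {n : ℕ} {ar : Fin n → R.Sorts} {s : R.Sorts} (σ : R.sig.Op n ar s),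
      D.QOpPred (D.mkOp R u' X' es' et' σ))
    (hu : u = u') (hX : X = X') :
    D.mkMor R u hsys X es et hm = D.mkMor R u' hsys' X' es' et' hm' := by
  subst hu; subst hX; rfl

def u1 : P1.Sorts → D.QS := fun s => Quot.mk _ (Sum.inl s)
def u2 : P2.Sorts → D.QS := fun s => Quot.mk _ (Sum.inr s)

end AmalgData

end Existence
section Existence2

variable {P P1 P2 : POASignature}

namespace AmalgData

variable (D : AmalgData P P1 P2)

lemma hm1 : ∀ {n : ℕ} {ar : Fin n → P1.Sorts} {s : P1.Sorts} (σ : P1.sig.Op n ar s),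
    D.QOpPred (D.mkOp P1 D.u1 D.H1 (fun _ => rfl) (fun _ => rfl) σ) := by
  intro n ar s σ
  refine ⟨?_, ?_, ?_⟩
  · intro hs args args' hargs h
    refine D.H1.src.monotone σ h args args' ?_
    intro i
    have hi := hargs i
    by_cases hb : P1.isSys (ar i) = true
    · have hb' : D.isSysQ (D.u1 (ar i)) = true := hb
      rw [dif_pos hb'] at hi
      rw [dif_pos hb]
      exact hi hb
    · have hb' : ¬ D.isSysQ (D.u1 (ar i)) = true := hb
      rw [dif_neg hb'] at hi
      rw [dif_neg hb]
      exact hi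
  · intro hs args args' hargs h
    refine D.H1.tgt.monotone σ h args args' ?_
    intro i
    have hi := hargs i
    by_cases hb : P1.isSys (ar i) = true
    · have hb' : D.isSysQ (D.u1 (ar i)) = true := hb
      rw [dif_pos hb'] at hi
      rw [dif_pos hb]
      exact hi hb
    · have hb' : ¬ D.isSysQ (D.u1 (ar i)) = true := hb
      rw [dif_neg hb'] at hi
      rw [dif_neg hb]
      exact hi
  · intro args
    exact D.H1.hom.map_op σ args

lemma hm2 : ∀ {n : ℕ} {ar : Fin n → P2.Sorts} {s : P2.Sorts} (σ : P2.sig.Op n ar s),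
    D.QOpPred (D.mkOp P2 D.u2 D.H2 (fun _ => rfl) (fun _ => rfl) σ) := by
  intro n ar s σ
  refine ⟨?_, ?_, ?_⟩
  · intro hs args args' hargs h
    refine D.H2.src.monotone σ h args args' ?_
    intro i
    have hi := hargs i
    by_cases hb : P2.isSys (ar i) = true
    · have hb' : D.isSysQ (D.u2 (ar i)) = true := hb
      rw [dif_pos hb'] at hi
      rw [dif_pos hb]
      exact hi hb
    · have hb' : ¬ D.isSysQ (D.u2 (ar i)) = true := hb
      rw [dif_neg hb'] at hi
      rw [dif_neg hb]
      exact hi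
  · intro hs args args' hargs h
    refine D.H2.tgt.monotone σ h args args' ?_
    intro i
    have hi := hargs i
    by_cases hb : P2.isSys (ar i) = true
    · have hb' : D.isSysQ (D.u2 (ar i)) = true := hb
      rw [dif_pos hb'] at hi
      rw [dif_pos hb]
      exact hi hb
    · have hb' : ¬ D.isSysQ (D.u2 (ar i)) = true := hb
      rw [dif_neg hb'] at hi
      rw [dif_neg hb]
      exact hi
  · intro args
    exact D.H2.hom.map_op σ args

def ψ1 : POASigMorphism P1 D.QSig :=
  D.mkMor P1 D.u1 (fun _ => rfl) D.H1 (fun _ => rfl) (fun _ => rfl) D.hm1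

def ψ2 : POASigMorphism P2 D.QSig :=
  D.mkMor P2 D.u2 (fun _ => rfl) D.H2 (fun _ => rfl) (fun _ => rfl) D.hm2

lemma comm : D.φ1.comp D.ψ1 = D.φ2.comp D.ψ2 := by
  have e1 : D.φ1.comp D.ψ1 = D.mkMor P (fun s => D.u1 (D.φ1.toMS.sortMap s))
      (fun s => D.φ1.sys_pres s) (D.φ1.reductHomObj D.H1) (fun _ => rfl) (fun _ => rfl)
      (fun σ => D.hm1 (D.φ1.toMS.opMap σ)) := rfl
  have e2 : D.φ2.comp D.ψ2 = D.mkMor P (fun s => D.u2 (D.φ2.toMS.sortMap s))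
      (fun s => D.φ2.sys_pres s) (D.φ2.reductHomObj D.H2) (fun _ => rfl) (fun _ => rfl)
      (fun σ => D.hm2 (D.φ2.toMS.opMap σ)) := rfl
  rw [e1, e2]
  exact D.mkMor_congr P _ _ _ _ _ _ _ _ _ _ _ _
    (funext fun s => Quot.sound ⟨s, rfl, rfl⟩) D.hH

lemma red1s : D.ψ1.reduct D.Ns = D.H1.src := by
  refine POAlgebra.ext' rfl (heq_of_eq ?_)
  funext s hs x y
  apply propext
  exact ⟨fun hx => hx hs, fun hx _ => hx⟩

lemma red1t : D.ψ1.reduct D.Nt = D.H1.tgt := by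
  refine POAlgebra.ext' rfl (heq_of_eq ?_)
  funext s hs x y
  apply propext
  exact ⟨fun hx => hx hs, fun hx _ => hx⟩

lemma red2s : D.ψ2.reduct D.Ns = D.H2.src := by
  refine POAlgebra.ext' rfl (heq_of_eq ?_)
  funext s hs x y
  apply propext
  exact ⟨fun hx => hx hs, fun hx _ => hx⟩

lemma red2t : D.ψ2.reduct D.Nt = D.H2.tgt := by
  refine POAlgebra.ext' rfl (heq_of_eq ?_)
  funext s hs x y
  apply propext
  exact ⟨fun hx => hx hs, fun hx _ => hx⟩

lemma red1 : D.ψ1.reductHomObj D.NH = D.H1 :=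
  HomObj.ext' D.red1s D.red1t
    (poahom_heq D.red1s D.red1t _ _ (fun _ => HEq.rfl))

lemma red2 : D.ψ2.reductHomObj D.NH = D.H2 :=
  HomObj.ext' D.red2s D.red2t
    (poahom_heq D.red2s D.red2t _ _ (fun _ => HEq.rfl))

end AmalgData

end Existence2
lemma idHom_heq {P : POASignature} {A B : POAlgebra P} (h : A = B) :
    HEq (POAHom.idHom A) (POAHom.idHom B) := by subst h; rfl

/-- pushout squares of theory morphisms are model amalgamation squares. -/
theorem stmt16 (T T1 T2 T' : POATheory)
    (φ1 : POATheoryMorphism T T1) (φ2 : POATheoryMorphism T T2)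
    (θ1 : POATheoryMorphism T1 T') (θ2 : POATheoryMorphism T2 T')
    (hcomm : φ1.comp θ1 = φ2.comp θ2)
    (hpo : ∀ (T'' : POATheory) (ψ1 : POATheoryMorphism T1 T'') (ψ2 : POATheoryMorphism T2 T''),
      φ1.comp ψ1 = φ2.comp ψ2 →
      ∃! μ : POATheoryMorphism T' T'', θ1.comp μ = ψ1 ∧ θ2.comp μ = ψ2) :
    (∀ (M1 : POAlgebra T1.sig) (M2 : POAlgebra T2.sig),
      SatTheory M1 T1.axioms → SatTheory M2 T2.axioms →
      φ1.mor.reduct M1 = φ2.mor.reduct M2 →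
      ∃! M' : POAlgebra T'.sig, SatTheory M' T'.axioms ∧
        θ1.mor.reduct M' = M1 ∧ θ2.mor.reduct M' = M2) ∧
    (∀ (H1 : HomObj T1.sig) (H2 : HomObj T2.sig),
      SatTheory H1.src T1.axioms → SatTheory H1.tgt T1.axioms →
      SatTheory H2.src T2.axioms → SatTheory H2.tgt T2.axioms →
      φ1.mor.reductHomObj H1 = φ2.mor.reductHomObj H2 →
      ∃! H' : HomObj T'.sig,
        (SatTheory H'.src T'.axioms ∧ SatTheory H'.tgt T'.axioms) ∧
        θ1.mor.reductHomObj H' = H1 ∧ θ2.mor.reductHomObj H' = H2) := by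
  have covS := cover_sort φ1 φ2 θ1 θ2 hcomm hpo
  have covO : ∀ {n : ℕ} {ar : Fin n → T'.sig.Sorts} {s : T'.sig.Sorts}
      (σ' : T'.sig.sig.Op n ar s), CovOp θ1 θ2 σ' :=
    fun σ' => cover_op φ1 φ2 θ1 θ2 hcomm hpo σ'
  have part2 : ∀ (H1 : HomObj T1.sig) (H2 : HomObj T2.sig),
      SatTheory H1.src T1.axioms → SatTheory H1.tgt T1.axioms →
      SatTheory H2.src T2.axioms → SatTheory H2.tgt T2.axioms →
      φ1.mor.reductHomObj H1 = φ2.mor.reductHomObj H2 →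
      ∃! H' : HomObj T'.sig,
        (SatTheory H'.src T'.axioms ∧ SatTheory H'.tgt T'.axioms) ∧
        θ1.mor.reductHomObj H' = H1 ∧ θ2.mor.reductHomObj H' = H2 := by
    intro H1 H2 hs1 ht1 hs2 ht2 hHH
    set D : AmalgData T.sig T1.sig T2.sig := ⟨φ1.mor, φ2.mor, H1, H2, hHH⟩ with hD
    set T'' : POATheory := ⟨D.QSig, D.ψ1.sen '' T1.axioms ∪ D.ψ2.sen '' T2.axioms⟩ with hT''
    set Ψ1 : POATheoryMorphism T1 T'' :=
      ⟨D.ψ1, fun A hA ρ hρ => (sat_lemma D.ψ1 A ρ).1 (hA _ (Or.inl ⟨ρ, hρ, rfl⟩))⟩ with hΨ1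
    set Ψ2 : POATheoryMorphism T2 T'' :=
      ⟨D.ψ2, fun A hA ρ hρ => (sat_lemma D.ψ2 A ρ).1 (hA _ (Or.inr ⟨ρ, hρ, rfl⟩))⟩ with hΨ2
    have hc : φ1.comp Ψ1 = φ2.comp Ψ2 := POATheoryMorphism.ext' D.comm
    obtain ⟨μ, ⟨hμ1, hμ2⟩, huniq⟩ := hpo T'' Ψ1 Ψ2 hc
    have satNs : SatTheory D.Ns T''.axioms := by
      rintro ρ (⟨ρ0, hρ0, rfl⟩ | ⟨ρ0, hρ0, rfl⟩)
      · exact (sat_lemma D.ψ1 D.Ns ρ0).2 (by rw [D.red1s]; exact hs1 ρ0 hρ0)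
      · exact (sat_lemma D.ψ2 D.Ns ρ0).2 (by rw [D.red2s]; exact hs2 ρ0 hρ0)
    have satNt : SatTheory D.Nt T''.axioms := by
      rintro ρ (⟨ρ0, hρ0, rfl⟩ | ⟨ρ0, hρ0, rfl⟩)
      · exact (sat_lemma D.ψ1 D.Nt ρ0).2 (by rw [D.red1t]; exact ht1 ρ0 hρ0)
      · exact (sat_lemma D.ψ2 D.Nt ρ0).2 (by rw [D.red2t]; exact ht2 ρ0 hρ0)
    have hmor1 : θ1.mor.comp μ.mor = D.ψ1 := congrArg POATheoryMorphism.mor hμ1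
    have hmor2 : θ2.mor.comp μ.mor = D.ψ2 := congrArg POATheoryMorphism.mor hμ2
    have eq1 : θ1.mor.reductHomObj (μ.mor.reductHomObj D.NH) = H1 := by
      calc θ1.mor.reductHomObj (μ.mor.reductHomObj D.NH)
          = (θ1.mor.comp μ.mor).reductHomObj D.NH := rfl
        _ = D.ψ1.reductHomObj D.NH := by rw [hmor1]
        _ = H1 := D.red1
    have eq2 : θ2.mor.reductHomObj (μ.mor.reductHomObj D.NH) = H2 := by
      calc θ2.mor.reductHomObj (μ.mor.reductHomObj D.NH)
          = (θ2.mor.comp μ.mor).reductHomObj D.NH := rfl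
        _ = D.ψ2.reductHomObj D.NH := by rw [hmor2]
        _ = H2 := D.red2
    refine ⟨μ.mor.reductHomObj D.NH, ⟨⟨μ.cond D.Ns satNs, μ.cond D.Nt satNt⟩, eq1, eq2⟩, ?_⟩
    rintro H' ⟨⟨_, _⟩, he1, he2⟩
    exact hom_uniq covS covO (he1.trans eq1.symm) (he2.trans eq2.symm)
  refine ⟨?_, part2⟩
  intro M1 M2 hM1 hM2 hM
  have hHH : φ1.mor.reductHomObj ⟨M1, M1, POAHom.idHom M1⟩
      = φ2.mor.reductHomObj ⟨M2, M2, POAHom.idHom M2⟩ := by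
    show (⟨φ1.mor.reduct M1, φ1.mor.reduct M1, POAHom.idHom (φ1.mor.reduct M1)⟩ : HomObj T.sig)
      = ⟨φ2.mor.reduct M2, φ2.mor.reduct M2, POAHom.idHom (φ2.mor.reduct M2)⟩
    rw [hM]
  obtain ⟨H', ⟨⟨hsa, hta⟩, he1, he2⟩, hun⟩ :=
    part2 ⟨M1, M1, POAHom.idHom M1⟩ ⟨M2, M2, POAHom.idHom M2⟩ hM1 hM1 hM2 hM2 hHH
  have hsrc1 : θ1.mor.reduct H'.src = M1 := congrArg HomObj.src he1
  have hsrc2 : θ2.mor.reduct H'.src = M2 := congrArg HomObj.src he2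
  refine ⟨H'.src, ⟨hsa, hsrc1, hsrc2⟩, ?_⟩
  rintro Mc ⟨_, hc1, hc2⟩
  exact alg_uniq covS covO (hc1.trans hsrc1.symm) (hc2.trans hsrc2.symm)
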